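/- For every alphabet size n ≥ 2 and every ε > 0, there exists a probability distribution P on n symbols whose Huffman code is anti-uniform and whose average length L(P) < 1 + ε; hence the infimum of average lengths of AUH codes on n symbols is 1. -/

import Mathlib

/-!
Every codeword length is at least `1` and at most `n - 1`, and the first one is exactly `1`, so
`1 ≤ L(P) ≤ 1 + (n - 2) (1 - p₁)`. The distributions `P_{n,δ}` of the paper are anti-uniform for
`δ ≤ 1/2` because their tails are geometric: `∑_{j ≥ a} p_j = δ / 2^(a-2)` for `a ≥ 2`. Letting
`δ → 0` pushes `L(P_{n,δ})` down to `1`.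
-/

open Finset

def IsAUH (n : ℕ) (p : ℕ → ℝ) : Prop :=
  (∀ i ∈ Finset.Icc 1 n, 0 ≤ p i) ∧
  (∀ i j, 1 ≤ i → i ≤ j → j ≤ n → p j ≤ p i) ∧
  (∑ i ∈ Finset.Icc 1 n, p i = 1) ∧
  (∀ i, 1 ≤ i → i ≤ n - 2 → ∑ j ∈ Finset.Icc (i + 2) n, p j ≤ p i)

noncomputable def avgLen (n : ℕ) (p : ℕ → ℝ) : ℝ :=
  ∑ i ∈ Finset.Icc 1 (n - 1), (i : ℝ) * p i + ((n : ℝ) - 1) * p n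

def codewordLength (n i : ℕ) : ℕ :=
  min i (n - 1)

section AverageLength

variable {n : ℕ} {p : ℕ → ℝ}

theorem avgLen_eq_sum_codewordLength (hn : 1 ≤ n) :
    avgLen n p = ∑ i ∈ Icc 1 n, (codewordLength n i : ℝ) * p i := by
  obtain ⟨m, rfl⟩ : ∃ m, n = m + 1 := ⟨n - 1, by omega⟩
  rw [avgLen, sum_Icc_succ_top (by omega), Nat.add_sub_cancel]
  congr 1
  · refine sum_congr rfl fun i hi => ?_
    rw [codewordLength, Nat.add_sub_cancel, min_eq_left (mem_Icc.1 hi).2]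
  · rw [codewordLength, Nat.add_sub_cancel, min_eq_right (Nat.le_succ m)]
    push_cast
    ring

theorem one_le_avgLen (hn : 2 ≤ n) (hp0 : ∀ i ∈ Icc 1 n, 0 ≤ p i)
    (hp1 : ∑ i ∈ Icc 1 n, p i = 1) : 1 ≤ avgLen n p := by
  rw [avgLen_eq_sum_codewordLength (by omega), ← hp1]
  refine sum_le_sum fun i hi => le_mul_of_one_le_left (hp0 i hi) ?_
  have : 1 ≤ codewordLength n i := by
    rw [codewordLength]
    have := (mem_Icc.1 hi).1
    omega
  exact_mod_cast this

theorem avgLen_le_one_add (hn : 2 ≤ n) (hp0 : ∀ i ∈ Icc 1 n, 0 ≤ p i)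
    (hp1 : ∑ i ∈ Icc 1 n, p i = 1) : avgLen n p ≤ 1 + ((n : ℝ) - 2) * (1 - p 1) := by
  set slack : ℕ → ℝ := fun i => ((n : ℝ) - 1 - codewordLength n i) * p i
  have hslack : ∀ i ∈ Icc 1 n, 0 ≤ slack i := fun i hi => by
    refine mul_nonneg (sub_nonneg.2 ?_) (hp0 i hi)
    have : codewordLength n i + 1 ≤ n := by rw [codewordLength]; omega
    rw [le_sub_iff_add_le]
    exact_mod_cast this
  have hslack_one : slack 1 = ((n : ℝ) - 2) * p 1 := by
    simp only [slack, codewordLength, min_eq_left (by omega : 1 ≤ n - 1)]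
    ring
  have hsum_slack : ∑ i ∈ Icc 1 n, slack i = (n - 1) - avgLen n p := by
    simp only [slack, sub_mul, sum_sub_distrib, ← mul_sum, hp1,
      avgLen_eq_sum_codewordLength (by omega : 1 ≤ n)]
    ring
  have := single_le_sum hslack (mem_Icc.2 ⟨le_rfl, by omega⟩)
  linarith

end AverageLength

/-- The paper's `P_{n,δ} = (1 - δ, δ/2, …, δ/2^(n-2), δ/2^(n-2))`. -/
noncomputable def antiUniformDist (n : ℕ) (δ : ℝ) (i : ℕ) : ℝ :=
  if i = 1 then 1 - δ else δ / 2 ^ (codewordLength n i - 1)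

section AntiUniformDist

variable {n : ℕ} {δ : ℝ}

@[simp]
theorem antiUniformDist_one : antiUniformDist n δ 1 = 1 - δ := by
  simp [antiUniformDist]

theorem antiUniformDist_of_ne_one {i : ℕ} (hi : i ≠ 1) :
    antiUniformDist n δ i = δ / 2 ^ (codewordLength n i - 1) := by
  simp [antiUniformDist, hi]

theorem antiUniformDist_le (hδ : 0 ≤ δ) {i : ℕ} (hi : i ≠ 1) : antiUniformDist n δ i ≤ δ := by
  rw [antiUniformDist_of_ne_one hi]
  exact div_le_self hδ (one_le_pow₀ one_le_two)

theorem antiUniformDist_nonneg (hδ0 : 0 ≤ δ) (hδ1 : δ ≤ 1) (i : ℕ) :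
    0 ≤ antiUniformDist n δ i := by
  unfold antiUniformDist
  split_ifs
  · linarith
  · positivity

theorem antitoneOn_antiUniformDist (hδ0 : 0 ≤ δ) (hδ : δ ≤ 1 / 2) :
    AntitoneOn (antiUniformDist n δ) (Set.Ici 1) := by
  intro i hi j _ hij
  by_cases hi1 : i = 1
  · by_cases hj1 : j = 1
    · rw [hi1, hj1]
    · rw [hi1, antiUniformDist_one]
      linarith [antiUniformDist_le (n := n) hδ0 hj1]
  · have hi2 : 2 ≤ i := by simp only [Set.mem_Ici] at hi; omega
    rw [antiUniformDist_of_ne_one hi1, antiUniformDist_of_ne_one (by omega : j ≠ 1)]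
    gcongr
    · exact one_le_two
    · simp only [codewordLength]
      omega

theorem sum_Icc_antiUniformDist {a : ℕ} (ha : 2 ≤ a) (han : a ≤ n) :
    ∑ j ∈ Icc a n, antiUniformDist n δ j = δ / 2 ^ (a - 2) := by
  induction han using Nat.decreasingInduction with
  | self =>
    rw [Icc_self, sum_singleton, antiUniformDist_of_ne_one (by omega), codewordLength,
      min_eq_right (by omega), show n - 1 - 1 = n - 2 by omega]
  | of_succ k hk ih =>
    rw [Icc_eq_cons_Ioc hk.le, sum_cons, ← Icc_add_one_left_eq_Ioc, ih (by omega),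
      antiUniformDist_of_ne_one (by omega), codewordLength, min_eq_left (by omega),
      show k - 1 = k - 2 + 1 by omega, show k + 1 - 2 = k - 2 + 1 by omega, pow_succ]
    ring

theorem sum_antiUniformDist (hn : 2 ≤ n) : ∑ i ∈ Icc 1 n, antiUniformDist n δ i = 1 := by
  rw [Icc_eq_cons_Ioc (by omega), sum_cons, ← Icc_add_one_left_eq_Ioc,
    one_add_one_eq_two,
    sum_Icc_antiUniformDist le_rfl hn, antiUniformDist_one]
  norm_num

theorem sum_Icc_add_two_antiUniformDist_le {i : ℕ} (hi : 1 ≤ i) (hin : i ≤ n - 2)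
    (hδ0 : 0 ≤ δ) (hδ : δ ≤ 1 / 2) :
    ∑ j ∈ Icc (i + 2) n, antiUniformDist n δ j ≤ antiUniformDist n δ i := by
  rw [sum_Icc_antiUniformDist (by omega) (by omega), Nat.add_sub_cancel]
  by_cases hi1 : i = 1
  · rw [hi1, antiUniformDist_one]
    linarith
  · rw [antiUniformDist_of_ne_one hi1, codewordLength, min_eq_left (by omega)]
    gcongr
    · exact one_le_two
    · omega

theorem isAUH_antiUniformDist (hn : 2 ≤ n) (hδ0 : 0 ≤ δ) (hδ : δ ≤ 1 / 2) :
    IsAUH n (antiUniformDist n δ) :=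
  ⟨fun i _ => antiUniformDist_nonneg hδ0 (by linarith) i,
    fun _ _ hi hij _ => antitoneOn_antiUniformDist hδ0 hδ hi (le_trans hi hij) hij,
    sum_antiUniformDist hn,
    fun _ hi hin => sum_Icc_add_two_antiUniformDist_le hi hin hδ0 hδ⟩

theorem avgLen_antiUniformDist_le (hn : 2 ≤ n) (hδ0 : 0 ≤ δ) (hδ : δ ≤ 1 / 2) :
    avgLen n (antiUniformDist n δ) ≤ 1 + ((n : ℝ) - 2) * δ := by
  obtain ⟨hp0, -, hp1, -⟩ := isAUH_antiUniformDist hn hδ0 hδ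
  simpa using avgLen_le_one_add hn hp0 hp1

end AntiUniformDist

theorem exists_isAUH_avgLen_lt {n : ℕ} (hn : 2 ≤ n) {ε : ℝ} (hε : 0 < ε) :
    ∃ p : ℕ → ℝ, IsAUH n p ∧ avgLen n p < 1 + ε := by
  have hn0 : (0 : ℝ) < n := by positivity
  set δ := min (1 / 2) (ε / n)
  have hδ0 : 0 < δ := lt_min (by norm_num) (by positivity)
  have hδε : n * δ ≤ ε := by
    rw [← le_div_iff₀' hn0]
    exact min_le_right _ _
  refine ⟨antiUniformDist n δ, isAUH_antiUniformDist hn hδ0.le (min_le_left _ _), ?_⟩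
  linarith [avgLen_antiUniformDist_le hn hδ0.le (min_le_left _ _)]

theorem avgLen_inf_one (n : ℕ) (hn : 2 ≤ n) :
    (∀ ε : ℝ, 0 < ε → ∃ p : ℕ → ℝ, IsAUH n p ∧ avgLen n p < 1 + ε) ∧
    sInf {x : ℝ | ∃ p : ℕ → ℝ, IsAUH n p ∧ avgLen n p = x} = 1 := by
  have approx := fun ε (hε : 0 < ε) => exists_isAUH_avgLen_lt hn hε
  refine ⟨approx, csInf_eq_of_forall_ge_of_forall_gt_exists_lt ?_ ?_ ?_⟩
  · obtain ⟨p, hp, -⟩ := approx 1 one_pos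
    exact ⟨_, p, hp, rfl⟩
  · rintro _ ⟨p, hp, rfl⟩
    exact one_le_avgLen hn hp.1 hp.2.2.1
  · intro w hw
    obtain ⟨p, hp, hlt⟩ := approx (w - 1) (by linarith)
    exact ⟨_, ⟨p, hp, rfl⟩, by linarith⟩
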